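/- Let U, V ∈ ℝ^{n×r} have orthonormal columns and set s = ‖(I_n − UUᵀ)·V·Vᵀ‖ (operator norm; s is the sine of the largest principal angle between the column spans of U and V). Then there exists an orthogonal matrix O ∈ ℝ^{r×r} such that: (i) for every unit vector x ∈ ℝⁿ, ‖xᵀ(V − UO)‖ ≤ ‖xᵀ(V − U·Uᵀ·V)‖ + ‖xᵀU‖·s²; (ii) for all unit vectors x ∈ ℝⁿ and y ∈ ℝʳ, |xᵀ(V − UO)·y| ≤ |xᵀ(V − U·Uᵀ·V)·y| + ‖xᵀU‖·s²; and (iii) ‖V − UO‖_{2,∞} ≤ ‖V − U·Uᵀ·V‖_{2,∞} + ‖U‖_{2,∞}·s². -/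

import Mathlib

open MeasureTheory ProbabilityTheory Matrix

noncomputable section

/-- ℓ²→ℓ² operator (spectral) norm of a real matrix. -/
def opNorm {m n : Type*} [Fintype m] [Fintype n] [DecidableEq n]
    (M : Matrix m n ℝ) : ℝ :=
  ‖LinearMap.toContinuousLinearMap (Matrix.toEuclideanLin M)‖

/-- ℓ²→ℓ² operator (spectral) norm of a complex matrix. -/
def opNormC {m n : Type*} [Fintype m] [Fintype n] [DecidableEq n]
    (M : Matrix m n ℂ) : ℝ :=
  ‖LinearMap.toContinuousLinearMap (Matrix.toEuclideanLin M)‖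

/-- Euclidean norm of a finitely indexed real vector. -/
def vnorm {n : Type*} [Fintype n] (x : n → ℝ) : ℝ :=
  Real.sqrt (∑ i, (x i) ^ 2)

/-- `‖M‖_{2,∞}`: the maximum Euclidean norm of the rows of `M`. -/
def twoInf {m n : Type*} [Fintype m] [Fintype n] (M : Matrix m n ℝ) : ℝ :=
  ⨆ i, vnorm (M i)

/-- The diagonal matrix `diag (σ 1, …, σ m)` built from a 1-indexed sequence `σ`. -/
def sdiag {m : ℕ} (σ : ℕ → ℝ) : Matrix (Fin m) (Fin m) ℝ :=
  Matrix.of fun i j => if i = j then σ ((i : ℕ) + 1) else 0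

/-- Orthogonal projection `W_{k,s} W_{k,s}ᵀ` onto the span of the (1-indexed)
columns `k,…,s` of `W`. -/
def projSlice {N m : ℕ} (W : Matrix (Fin N) (Fin m) ℝ) (k s : ℕ) :
    Matrix (Fin N) (Fin N) ℝ :=
  Matrix.of fun a b =>
    ∑ j : Fin m, if k ≤ (j : ℕ) + 1 ∧ (j : ℕ) + 1 ≤ s then W a j * W b j else 0

/-- `‖·‖_{2,∞}` of the submatrix of `M` given by the (1-indexed) columns `k,…,s`. -/
def sliceTwoInf {N m : ℕ} (M : Matrix (Fin N) (Fin m) ℝ) (k s : ℕ) : ℝ :=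
  ⨆ a, Real.sqrt (∑ j : Fin m,
    if k ≤ (j : ℕ) + 1 ∧ (j : ℕ) + 1 ≤ s then (M a j) ^ 2 else 0)

/-- `η = (11 b²/(b−1)²) √(2 (log 9) r + (K+7) log(N+n))`. -/
def eta (N n r : ℕ) (K b : ℝ) : ℝ :=
  11 * b ^ 2 / (b - 1) ^ 2 *
    Real.sqrt (2 * Real.log 9 * r + (K + 7) * Real.log ((N : ℝ) + n))

/-- `χ(b) = 1 + 1/(4b(b−1))`. -/
def chi (b : ℝ) : ℝ := 1 + 1 / (4 * b * (b - 1))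

/-- `ξ(b) = 1 + 1/(2(b−1)²)`. -/
def xib (b : ℝ) : ℝ := 1 + 1 / (2 * (b - 1) ^ 2)

/-- `γ = (9 b²/(b−1)²) √(r (K+7) log(N+n))`. -/
def gam (N n r : ℕ) (K b : ℝ) : ℝ :=
  9 * b ^ 2 / (b - 1) ^ 2 *
    Real.sqrt ((r : ℝ) * (K + 7) * Real.log ((N : ℝ) + n))

/-- `min {δ_{k-1}, δ_s}` where `δ_j = σ_j − σ_{j+1}` (1-indexed) and `δ_0 = ∞`
(so for `k = 1` the minimum is just `δ_s`). -/
def dmin (σ : ℕ → ℝ) (k s : ℕ) : ℝ :=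
  if k = 1 then σ s - σ (s + 1) else min (σ (k - 1) - σ k) (σ s - σ (s + 1))

/-- The symmetric dilation `ℰ = [[0, E], [Eᵀ, 0]]` of a rectangular matrix `E`. -/
def dil {N n : ℕ} (E : Matrix (Fin N) (Fin n) ℝ) :
    Matrix (Fin N ⊕ Fin n) (Fin N ⊕ Fin n) ℝ :=
  Matrix.fromBlocks 0 E Eᵀ 0

/-- Complex resolvent `G(z) = (z I − ℰ)⁻¹` of the dilation. -/
def resolvC {N n : ℕ} (z : ℂ) (E : Matrix (Fin N) (Fin n) ℝ) :
    Matrix (Fin N ⊕ Fin n) (Fin N ⊕ Fin n) ℂ :=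
  (z • (1 : Matrix (Fin N ⊕ Fin n) (Fin N ⊕ Fin n) ℂ) -
      (dil E).map (Complex.ofReal))⁻¹

/-- `φ₁(z) = z − ∑_{t=N+1}^{N+n} G(z)_{tt}` (complex version). -/
def phi1C {N n : ℕ} (z : ℂ) (E : Matrix (Fin N) (Fin n) ℝ) : ℂ :=
  z - ∑ t : Fin n, resolvC z E (Sum.inr t) (Sum.inr t)

/-- `φ₂(z) = z − ∑_{t=1}^{N} G(z)_{tt}` (complex version). -/
def phi2C {N n : ℕ} (z : ℂ) (E : Matrix (Fin N) (Fin n) ℝ) : ℂ :=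
  z - ∑ t : Fin N, resolvC z E (Sum.inl t) (Sum.inl t)

/-- Real resolvent `G(z) = (z I − ℰ)⁻¹` of the dilation, for real `z`. -/
def resolvR {N n : ℕ} (z : ℝ) (E : Matrix (Fin N) (Fin n) ℝ) :
    Matrix (Fin N ⊕ Fin n) (Fin N ⊕ Fin n) ℝ :=
  (z • (1 : Matrix (Fin N ⊕ Fin n) (Fin N ⊕ Fin n) ℝ) - dil E)⁻¹

/-- `φ₁(z)` for real `z` (equals the complex version at a real point). -/
def phi1R {N n : ℕ} (z : ℝ) (E : Matrix (Fin N) (Fin n) ℝ) : ℝ :=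
  z - ∑ t : Fin n, resolvR z E (Sum.inr t) (Sum.inr t)

/-- `φ₂(z)` for real `z` (equals the complex version at a real point). -/
def phi2R {N n : ℕ} (z : ℝ) (E : Matrix (Fin N) (Fin n) ℝ) : ℝ :=
  z - ∑ t : Fin N, resolvR z E (Sum.inl t) (Sum.inl t)

/-- `Φ(z)`: diagonal matrix whose first `N` diagonal entries are `1/φ₁(z)` and whose
last `n` diagonal entries are `1/φ₂(z)`. -/
def PhiC {N n : ℕ} (z : ℂ) (E : Matrix (Fin N) (Fin n) ℝ) :
    Matrix (Fin N ⊕ Fin n) (Fin N ⊕ Fin n) ℂ :=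
  Matrix.of fun p q =>
    if p = q then Sum.elim (fun _ => (phi1C z E)⁻¹) (fun _ => (phi2C z E)⁻¹) p else 0

/-- The `(N+n) × 2r` matrix `𝒰` of eigenvectors of the dilation of `A = U D Vᵀ`. -/
def calU {N n r : ℕ} (U : Matrix (Fin N) (Fin r) ℝ) (V : Matrix (Fin n) (Fin r) ℝ) :
    Matrix (Fin N ⊕ Fin n) (Fin r ⊕ Fin r) ℝ :=
  Matrix.fromBlocks ((Real.sqrt 2)⁻¹ • U) ((Real.sqrt 2)⁻¹ • U)
    ((Real.sqrt 2)⁻¹ • V) (-((Real.sqrt 2)⁻¹ • V))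

/-- Schatten `p`-norm: `(∑ᵢ sᵢ(M)ᵖ)^{1/p}`, where the singular values `sᵢ(M)` are the
square roots of the eigenvalues of `Mᴴ M`. -/
def schatten (p : ℝ) {m r : ℕ} (M : Matrix (Fin m) (Fin r) ℝ) : ℝ :=
  (∑ i, Real.sqrt ((Matrix.isHermitian_conjTranspose_mul_self M).eigenvalues i) ^ p) ^ (1 / p)

/-!
Put `M = Uᵀ V` and take a singular value decomposition `M = P Σ Qᵀ`; the orthogonal matrix is
`O = P Qᵀ`. With `E = (I - U Uᵀ) V` one has `Eᵀ E = I - Mᵀ M`, so `(E Q)ᵀ (E Q) = I - Σ²` and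
every singular value satisfies `0 ≤ 1 - σᵢ² ≤ ‖E‖² ≤ s²`, whence `|σᵢ - 1| ≤ 1 - σᵢ² ≤ s²` and
`‖M - O‖ = ‖P (Σ - I) Qᵀ‖ ≤ s²`. All three bounds then follow from the splitting
`V - U O = (V - U M) + U (M - O)`.
-/

open WithLp
open scoped Matrix.Norms.L2Operator

section EuclideanNorm

variable {m ι : Type*} [Fintype m] [Fintype ι]

theorem vnorm_eq_norm_toLp (x : ι → ℝ) : vnorm x = ‖toLp 2 x‖ := by
  simp [vnorm, EuclideanSpace.norm_eq]

theorem vnorm_nonneg (x : ι → ℝ) : 0 ≤ vnorm x :=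
  Real.sqrt_nonneg _

theorem vnorm_add_le (x y : ι → ℝ) : vnorm (x + y) ≤ vnorm x + vnorm y := by
  simpa only [vnorm_eq_norm_toLp, toLp_add] using norm_add_le (toLp 2 x) (toLp 2 y)

theorem abs_dotProduct_le_vnorm_mul_vnorm (x y : ι → ℝ) : |x ⬝ᵥ y| ≤ vnorm x * vnorm y := by
  simpa [vnorm_eq_norm_toLp, EuclideanSpace.inner_toLp_toLp, dotProduct_comm]
    using abs_real_inner_le_norm (toLp 2 x) (toLp 2 y)

theorem opNorm_eq_l2_opNorm [DecidableEq ι] (A : Matrix m ι ℝ) : opNorm A = ‖A‖ := rfl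

theorem vnorm_mulVec_le [DecidableEq ι] (A : Matrix m ι ℝ) (x : ι → ℝ) :
    vnorm (A *ᵥ x) ≤ ‖A‖ * vnorm x := by
  simpa [vnorm_eq_norm_toLp] using A.l2_opNorm_mulVec (toLp 2 x)

theorem vnorm_vecMul_le [DecidableEq m] [DecidableEq ι] (A : Matrix m ι ℝ) (x : m → ℝ) :
    vnorm (x ᵥ* A) ≤ ‖A‖ * vnorm x := by
  have hT : ‖Aᵀ‖ = ‖A‖ := by
    simpa only [conjTranspose_eq_transpose_of_trivial] using l2_opNorm_conjTranspose A
  rw [← mulVec_transpose, ← hT]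
  exact vnorm_mulVec_le Aᵀ x

theorem twoInf_le_add_mul {k l : Type*} [Fintype k] [Fintype l] {A B : Matrix m k ℝ}
    {C : Matrix m l ℝ} {t : ℝ} (ht : 0 ≤ t)
    (h : ∀ i, vnorm (A i) ≤ vnorm (B i) + vnorm (C i) * t) :
    twoInf A ≤ twoInf B + twoInf C * t := by
  rcases isEmpty_or_nonempty m with hm | hm
  · simp [twoInf]
  unfold twoInf
  refine ciSup_le fun i => (h i).trans (add_le_add ?_ (mul_le_mul_of_nonneg_right ?_ ht))
  · exact le_ciSup (f := fun i => vnorm (B i)) (Set.finite_range _).bddAbove i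
  · exact le_ciSup (f := fun i => vnorm (C i)) (Set.finite_range _).bddAbove i

end EuclideanNorm

namespace Matrix

theorem transpose_mul_self_diag_nonneg {m ι : Type*} [Fintype m] (A : Matrix m ι ℝ) (i : ι) :
    0 ≤ (Aᵀ * A) i i :=
  Finset.sum_nonneg fun a _ => mul_self_nonneg (A a i)

variable {m ι : Type*} [Fintype m] [Fintype ι] [DecidableEq ι]

theorem l2_opNorm_le_one_of_transpose_mul_self_eq_one {P : Matrix m ι ℝ} (hP : Pᵀ * P = 1) :
    ‖P‖ ≤ 1 := by
  have h : ‖P‖ * ‖P‖ ≤ 1 := by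
    rw [← l2_opNorm_conjTranspose_mul_self, conjTranspose_eq_transpose_of_trivial, hP,
      cstar_norm_def, map_one]
    exact ContinuousLinearMap.norm_id_le
  nlinarith [norm_nonneg P]

theorem le_l2_opNorm_sq_of_transpose_mul_self_eq_diagonal {A : Matrix m ι ℝ} {d : ι → ℝ}
    (hA : Aᵀ * A = diagonal d) (i : ι) : d i ≤ ‖A‖ ^ 2 := by
  have h : ‖diagonal d‖ = ‖A‖ ^ 2 := by
    rw [← hA, ← conjTranspose_eq_transpose_of_trivial, l2_opNorm_conjTranspose_mul_self, sq]
  rw [← h, l2_opNorm_diagonal]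
  exact (le_abs_self _).trans (norm_le_pi_norm d i)

theorem exists_orthogonal_mul_diagonal_sqrt {W : Matrix ι ι ℝ} {d : ι → ℝ}
    (hW : Wᵀ * W = diagonal d) :
    ∃ P : Matrix ι ι ℝ, Pᵀ * P = 1 ∧ W = P * diagonal fun i => √(d i) := by
  have hd : ∀ i, 0 ≤ d i := fun i => by
    simpa [hW] using transpose_mul_self_diag_nonneg W i
  set c : ι → EuclideanSpace ℝ ι := fun i => toLp 2 (Wᵀ i)
  have hc : ∀ i j, inner ℝ (c i) (c j) = if i = j then d i else 0 := fun i j => by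
    have := congrFun (congrFun hW i) j
    simp only [mul_apply, transpose_apply, diagonal_apply] at this
    simp [c, EuclideanSpace.inner_toLp_toLp, dotProduct, ← this, mul_comm]
  set v : ι → EuclideanSpace ℝ ι := fun i => (√(d i))⁻¹ • c i
  have hv : Orthonormal ℝ ({i | d i ≠ 0}.domRestrict v) := by
    rw [orthonormal_iff_ite]
    rintro ⟨i, hi⟩ ⟨j, hj⟩
    simp only [Set.domRestrict_apply, v, real_inner_smul_left, real_inner_smul_right, hc,
      Subtype.mk.injEq]
    split_ifs with hij
    · subst hij
      rw [← mul_assoc, ← mul_inv, Real.mul_self_sqrt (hd i), inv_mul_cancel₀ hi]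
    · simp
  -- the columns with `d i = 0` vanish, so any completion of the normalized others will do
  obtain ⟨b, hb⟩ := hv.exists_orthonormalBasis_extension_of_card_eq (by simp)
  refine ⟨(EuclideanSpace.basisFun ι ℝ).toBasis.toMatrix b.toBasis, ?_, ?_⟩
  · simpa [mem_unitaryGroup_iff', star_eq_conjTranspose] using
      (EuclideanSpace.basisFun ι ℝ).toMatrix_orthonormalBasis_mem_unitary b
  · ext a i
    rw [mul_diagonal, Module.Basis.toMatrix_apply, OrthonormalBasis.coe_toBasis,
      OrthonormalBasis.coe_toBasis_repr_apply, EuclideanSpace.basisFun_repr]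
    by_cases hi : d i = 0
    · have : c i = 0 := by
        rw [← inner_self_eq_zero (𝕜 := ℝ), hc, if_pos rfl, hi]
      simpa [hi, c] using congrFun (congrArg ofLp this) a
    · have : √(d i) ≠ 0 := by simpa [Real.sqrt_eq_zero', not_le] using (hd i).lt_of_ne' hi
      rw [hb i hi]
      simp only [v, c, PiLp.smul_apply, smul_eq_mul, transpose_apply]
      field_simp

theorem exists_svd (M : Matrix ι ι ℝ) :
    ∃ (P Q : Matrix ι ι ℝ) (σ : ι → ℝ), Pᵀ * P = 1 ∧ Qᵀ * Q = 1 ∧ (∀ i, 0 ≤ σ i) ∧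
      M = P * diagonal σ * Qᵀ := by
  obtain ⟨Q, d, hQ, hMM⟩ : ∃ (Q : Matrix ι ι ℝ) (d : ι → ℝ),
      Qᵀ * Q = 1 ∧ Mᵀ * M = Q * diagonal d * Qᵀ := by
    have hH : (Mᵀ * M).IsHermitian := by simpa using isHermitian_conjTranspose_mul_self M
    refine ⟨hH.eigenvectorUnitary, hH.eigenvalues, ?_, ?_⟩
    · simpa [star_eq_conjTranspose] using Unitary.coe_star_mul_self hH.eigenvectorUnitary
    · simpa [star_eq_conjTranspose] using hH.spectral_theorem
  have hMQ : (M * Q)ᵀ * (M * Q) = diagonal d := by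
    rw [transpose_mul, Matrix.mul_assoc, ← Matrix.mul_assoc Mᵀ, hMM]
    simp only [Matrix.mul_assoc, hQ, Matrix.mul_one]
    rw [← Matrix.mul_assoc, hQ, Matrix.one_mul]
  obtain ⟨P, hP, hMQ_eq⟩ := exists_orthogonal_mul_diagonal_sqrt hMQ
  refine ⟨P, Q, fun i => √(d i), hP, hQ, fun i => Real.sqrt_nonneg _, ?_⟩
  rw [← hMQ_eq, Matrix.mul_assoc, mul_eq_one_comm.mp hQ, Matrix.mul_one]

variable [DecidableEq m]

theorem l2_opNorm_mul_le_of_transpose_mul_self_eq_one {l : Type*} [Fintype l] (A : Matrix l m ℝ)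
    {Q : Matrix m ι ℝ} (hQ : Qᵀ * Q = 1) : ‖A * Q‖ ≤ ‖A‖ :=
  (l2_opNorm_mul A Q).trans
    (mul_le_of_le_one_right (norm_nonneg A) (l2_opNorm_le_one_of_transpose_mul_self_eq_one hQ))

theorem transpose_mul_self_one_sub_mul_transpose_mul {U V : Matrix m ι ℝ} (hU : Uᵀ * U = 1)
    (hV : Vᵀ * V = 1) :
    ((1 - U * Uᵀ) * V)ᵀ * ((1 - U * Uᵀ) * V) = 1 - (Uᵀ * V)ᵀ * (Uᵀ * V) := by
  have hproj : (1 - U * Uᵀ)ᵀ * (1 - U * Uᵀ) = 1 - U * Uᵀ := by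
    simp only [transpose_sub, transpose_one, transpose_mul, transpose_transpose, sub_mul, mul_sub,
      Matrix.one_mul, Matrix.mul_one, Matrix.mul_assoc, ← Matrix.mul_assoc Uᵀ U, hU]
    abel
  rw [transpose_mul, Matrix.mul_assoc, ← Matrix.mul_assoc _ _ V, hproj]
  simp only [Matrix.mul_sub, Matrix.sub_mul, Matrix.one_mul, transpose_mul, transpose_transpose,
    Matrix.mul_assoc, hV]

theorem exists_orthogonal_l2_opNorm_transpose_mul_sub_le {U V : Matrix m ι ℝ}
    (hU : Uᵀ * U = 1) (hV : Vᵀ * V = 1) :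
    ∃ O : Matrix ι ι ℝ, Oᵀ * O = 1 ∧ ‖Uᵀ * V - O‖ ≤ ‖(1 - U * Uᵀ) * (V * Vᵀ)‖ ^ 2 := by
  obtain ⟨P, Q, σ, hP, hQ, hσ, hM⟩ := (Uᵀ * V).exists_svd
  set s := ‖(1 - U * Uᵀ) * (V * Vᵀ)‖
  have hQQ : Q * Qᵀ = 1 := mul_eq_one_comm.mp hQ
  have hMM : (Uᵀ * V)ᵀ * (Uᵀ * V) = Q * diagonal (fun i => σ i ^ 2) * Qᵀ := by
    rw [hM]
    simp only [transpose_mul, transpose_transpose, diagonal_transpose, Matrix.mul_assoc]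
    rw [← Matrix.mul_assoc Pᵀ, hP, Matrix.one_mul, ← Matrix.mul_assoc (diagonal σ),
      diagonal_mul_diagonal]
    simp only [sq]
  set E := (1 - U * Uᵀ) * V
  have hE : ‖E‖ ≤ s := by
    have : E = (1 - U * Uᵀ) * (V * Vᵀ) * V := by simp [E, Matrix.mul_assoc, hV]
    rw [this]
    exact l2_opNorm_mul_le_of_transpose_mul_self_eq_one _ hV
  have hEQ : (E * Q)ᵀ * (E * Q) = diagonal fun i => 1 - σ i ^ 2 := by
    rw [transpose_mul, Matrix.mul_assoc, ← Matrix.mul_assoc Eᵀ,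
      transpose_mul_self_one_sub_mul_transpose_mul hU hV, hMM, Matrix.sub_mul, Matrix.mul_sub,
      Matrix.one_mul, hQ]
    simp only [Matrix.mul_assoc, hQ, Matrix.mul_one]
    rw [← Matrix.mul_assoc, hQ, Matrix.one_mul, ← diagonal_one, diagonal_sub]
  have hσ1 : ∀ i, |σ i - 1| ≤ s ^ 2 := fun i => by
    have h0 : 0 ≤ 1 - σ i ^ 2 := by
      simpa only [hEQ, diagonal_apply_eq] using transpose_mul_self_diag_nonneg (E * Q) i
    have h1 : 1 - σ i ^ 2 ≤ s ^ 2 := by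
      grw [le_l2_opNorm_sq_of_transpose_mul_self_eq_diagonal hEQ i,
        l2_opNorm_mul_le_of_transpose_mul_self_eq_one E hQ, hE]
    rw [abs_le]
    constructor <;> nlinarith [hσ i]
  refine ⟨P * Qᵀ, ?_, ?_⟩
  · rw [transpose_mul, transpose_transpose, Matrix.mul_assoc, ← Matrix.mul_assoc Pᵀ, hP,
      Matrix.one_mul, hQQ]
  · have hdiff : Uᵀ * V - P * Qᵀ = P * diagonal (fun i => σ i - 1) * Qᵀ := by
      have : diagonal (fun i => σ i - 1) = diagonal σ - 1 := by
        rw [← diagonal_one, diagonal_sub]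
      rw [this, Matrix.mul_sub, Matrix.sub_mul, Matrix.mul_one, hM]
    have hQt : Qᵀᵀ * Qᵀ = 1 := by rwa [transpose_transpose]
    calc ‖Uᵀ * V - P * Qᵀ‖ ≤ ‖P‖ * ‖diagonal fun i => σ i - 1‖ * ‖Qᵀ‖ := by
          rw [hdiff]; grw [l2_opNorm_mul, l2_opNorm_mul]
      _ ≤ 1 * s ^ 2 * 1 := by
          gcongr
          · exact l2_opNorm_le_one_of_transpose_mul_self_eq_one hP
          · rw [l2_opNorm_diagonal]
            exact pi_norm_le_iff_of_nonneg (sq_nonneg s) |>.mpr hσ1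
          · exact l2_opNorm_le_one_of_transpose_mul_self_eq_one hQt
      _ = s ^ 2 := by ring

end Matrix

theorem stmt12_procrustes_pointwise_bounds_general
    (n r : ℕ)
    (U V : Matrix (Fin n) (Fin r) ℝ) (hU : Uᵀ * U = 1) (hV : Vᵀ * V = 1) :
    ∃ O : Matrix (Fin r) (Fin r) ℝ, Oᵀ * O = 1 ∧
      (∀ x : Fin n → ℝ, vnorm x = 1 →
        vnorm (Matrix.vecMul x (V - U * O)) ≤
          vnorm (Matrix.vecMul x (V - U * (Uᵀ * V))) +
            vnorm (Matrix.vecMul x U) * opNorm ((1 - U * Uᵀ) * (V * Vᵀ)) ^ 2) ∧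
      (∀ (x : Fin n → ℝ) (y : Fin r → ℝ), vnorm x = 1 → vnorm y = 1 →
        |dotProduct x ((V - U * O).mulVec y)| ≤
          |dotProduct x ((V - U * (Uᵀ * V)).mulVec y)| +
            vnorm (Matrix.vecMul x U) * opNorm ((1 - U * Uᵀ) * (V * Vᵀ)) ^ 2) ∧
      twoInf (V - U * O) ≤
        twoInf (V - U * (Uᵀ * V)) + twoInf U * opNorm ((1 - U * Uᵀ) * (V * Vᵀ)) ^ 2 := by
  obtain ⟨O, hO, hE⟩ := exists_orthogonal_l2_opNorm_transpose_mul_sub_le hU hV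
  rw [opNorm_eq_l2_opNorm]
  set s := ‖(1 - U * Uᵀ) * (V * Vᵀ)‖
  set E := Uᵀ * V - O
  have hsplit : V - U * O = V - U * (Uᵀ * V) + U * E := by
    rw [Matrix.mul_sub]; abel
  have hrow : ∀ x : Fin n → ℝ, vnorm (x ᵥ* (V - U * O)) ≤
      vnorm (x ᵥ* (V - U * (Uᵀ * V))) + vnorm (x ᵥ* U) * s ^ 2 := fun x => by
    rw [hsplit, vecMul_add, ← vecMul_vecMul]
    grw [vnorm_add_le, vnorm_vecMul_le E, hE, mul_comm]
    exact vnorm_nonneg _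
  refine ⟨O, hO, fun x _ => hrow x, fun x y _ hy => ?_,
    twoInf_le_add_mul (sq_nonneg s) fun i => ?_⟩
  · rw [hsplit, add_mulVec, dotProduct_add, ← mulVec_mulVec, dotProduct_mulVec x U]
    have hEy : vnorm (E *ᵥ y) ≤ s ^ 2 := (vnorm_mulVec_le E y).trans (by rwa [hy, mul_one])
    grw [abs_add_le, abs_dotProduct_le_vnorm_mul_vnorm (x ᵥ* U), hEy]
    exact vnorm_nonneg _
  · have := hrow (Pi.single i 1)
    rwa [single_one_vecMul, single_one_vecMul, single_one_vecMul] at this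

/-- Proposition 19 of the paper: comparison of orthonormal frames
up to an orthogonal transformation, in linear, bilinear and row-wise form. -/
theorem stmt12_procrustes_pointwise_bounds
    (n r : ℕ) (hn : 0 < n) (hr : 0 < r) (hrn : r ≤ n)
    (U V : Matrix (Fin n) (Fin r) ℝ) (hU : Uᵀ * U = 1) (hV : Vᵀ * V = 1) :
    ∃ O : Matrix (Fin r) (Fin r) ℝ, Oᵀ * O = 1 ∧
      (∀ x : Fin n → ℝ, vnorm x = 1 →
        vnorm (Matrix.vecMul x (V - U * O)) ≤
          vnorm (Matrix.vecMul x (V - U * (Uᵀ * V))) +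
            vnorm (Matrix.vecMul x U) * opNorm ((1 - U * Uᵀ) * (V * Vᵀ)) ^ 2) ∧
      (∀ (x : Fin n → ℝ) (y : Fin r → ℝ), vnorm x = 1 → vnorm y = 1 →
        |dotProduct x ((V - U * O).mulVec y)| ≤
          |dotProduct x ((V - U * (Uᵀ * V)).mulVec y)| +
            vnorm (Matrix.vecMul x U) * opNorm ((1 - U * Uᵀ) * (V * Vᵀ)) ^ 2) ∧
      twoInf (V - U * O) ≤
        twoInf (V - U * (Uᵀ * V)) + twoInf U * opNorm ((1 - U * Uᵀ) * (V * Vᵀ)) ^ 2 :=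
  stmt12_procrustes_pointwise_bounds_general n r U V hU hV
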